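/- Let u and v be vertices of a series-parallel dag with the DePa labeling, assume d(u) ≤ d(v), and let c be the critical vertex of (u, v): the vertex whose fork-path equals the longest common prefix of f(u) and f(v) and whose dag-depth is maximal subject to d(c) ≤ d(v). Then u ≼ v if and only if d(u) ≤ d(c) ≤ d(v). -/

import Mathlib

/-- Series-parallel dag shapes: a single vertex, serial composition
(identifying the sink of `g1` with the source of `g2`), or parallel
composition (fresh source with edges to the sources of `g1`, `g2`, and a
fresh sink with edges from their sinks). -/
inductive SP : Type where
  | vert : SP
  | seq : SP → SP → SP
  | par : SP → SP → SP

/-- Non-source vertices of a series-parallel dag. -/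
def NV : SP → Type
  | .vert => Empty
  | .seq g1 g2 => NV g1 ⊕ NV g2
  | .par g1 g2 => ((Unit ⊕ NV g1) ⊕ (Unit ⊕ NV g2)) ⊕ Unit

/-- Vertices: the source, or a non-source vertex. -/
abbrev V (g : SP) : Type := Unit ⊕ NV g

/-- The (unique) source of a series-parallel dag. -/
def src (g : SP) : V g := Sum.inl ()

/-- Embedding of the first component of a serial composition. -/
def emb1 (g1 g2 : SP) : V g1 → V (.seq g1 g2)
  | .inl _ => Sum.inl ()
  | .inr n => Sum.inr (Sum.inl n)

/-- The (unique) sink of a series-parallel dag. -/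
def snk : (g : SP) → V g
  | .vert => Sum.inl ()
  | .seq g1 g2 =>
    match snk g2 with
    | .inl _ => emb1 g1 g2 (snk g1)
    | .inr n => Sum.inr (Sum.inr n)
  | .par _ _ => Sum.inr (Sum.inr ())

/-- Embedding of the second component of a serial composition:
the source of `g2` is identified with the sink of `g1`. -/
def emb2 (g1 g2 : SP) : V g2 → V (.seq g1 g2)
  | .inl _ => emb1 g1 g2 (snk g1)
  | .inr n => Sum.inr (Sum.inr n)

/-- Embedding of the left branch of a parallel composition. -/
def embL (g1 g2 : SP) (v : V g1) : V (.par g1 g2) := Sum.inr (Sum.inl (Sum.inl v))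

/-- Embedding of the right branch of a parallel composition. -/
def embR (g1 g2 : SP) (v : V g2) : V (.par g1 g2) := Sum.inr (Sum.inl (Sum.inr v))

/-- Edges of a series-parallel dag. -/
def Edge : (g : SP) → V g → V g → Prop
  | .vert, _, _ => False
  | .seq g1 g2, u, v =>
      (∃ a b, Edge g1 a b ∧ u = emb1 g1 g2 a ∧ v = emb1 g1 g2 b) ∨
      (∃ a b, Edge g2 a b ∧ u = emb2 g1 g2 a ∧ v = emb2 g1 g2 b)
  | .par g1 g2, u, v =>
      (∃ a b, Edge g1 a b ∧ u = embL g1 g2 a ∧ v = embL g1 g2 b) ∨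
      (∃ a b, Edge g2 a b ∧ u = embR g1 g2 a ∧ v = embR g1 g2 b) ∨
      (u = src (.par g1 g2) ∧ v = embL g1 g2 (src g1)) ∨
      (u = src (.par g1 g2) ∧ v = embR g1 g2 (src g2)) ∨
      (u = embL g1 g2 (snk g1) ∧ v = snk (.par g1 g2)) ∨
      (u = embR g1 g2 (snk g2) ∧ v = snk (.par g1 g2))

/-- `Reach g u v` (`u ≼ v`): there is a directed path (possibly empty) from `u` to `v`. -/
def Reach (g : SP) : V g → V g → Prop := Relation.ReflTransGen (Edge g)

/-- The dag-depth of a vertex (the length of a longest path ending at it),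
computed by the DePa rules: the source has depth 0; at a fork both children
have depth one greater; at a join the new vertex has depth
`1 + max` of the depths of the joining vertices. -/
def depth : (g : SP) → V g → ℕ
  | .vert, _ => 0
  | .seq _ _, .inl _ => 0
  | .seq g1 _, .inr (.inl n) => depth g1 (Sum.inr n)
  | .seq g1 g2, .inr (.inr n) => depth g1 (snk g1) + depth g2 (Sum.inr n)
  | .par _ _, .inl _ => 0
  | .par g1 _, .inr (.inl (.inl v)) => 1 + depth g1 v
  | .par _ g2, .inr (.inl (.inr v)) => 1 + depth g2 v
  | .par g1 g2, .inr (.inr _) => 1 + max (1 + depth g1 (snk g1)) (1 + depth g2 (snk g2))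

/-- The fork-path of a vertex, as a list of bits (`false` = L, `true` = R),
outermost fork first: the root has the empty path, a fork extends the path by
L and R for the two branches, and a join restores the common prefix. -/
def fpath : (g : SP) → V g → List Bool
  | .vert, _ => []
  | .seq _ _, .inl _ => []
  | .seq g1 _, .inr (.inl n) => fpath g1 (Sum.inr n)
  | .seq _ g2, .inr (.inr n) => fpath g2 (Sum.inr n)
  | .par _ _, .inl _ => []
  | .par g1 _, .inr (.inl (.inl v)) => false :: fpath g1 v
  | .par _ g2, .inr (.inl (.inr v)) => true :: fpath g2 v
  | .par _ _, .inr (.inr _) => []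

/-- Longest common prefix of two lists. -/
def lcp : List Bool → List Bool → List Bool
  | a :: as, b :: bs => if a = b then a :: lcp as bs else []
  | _, _ => []

/-!
Along an edge the depth increases and the fork-path gains or loses one final symbol (every edge
is a fork or a join). Hence, walking from `u` to `v`, the prefix `lcp (f u) (f x)` of the current
vertex `x` either stays the same or becomes `f x`, so some vertex `w` on the walk has
`f w = lcp (f u) (f v)` and `d u ≤ d w ≤ d v`; maximality of `c` gives `d u ≤ d c`.
Conversely, by induction on the series-parallel decomposition, two vertices whose fork-paths are
prefix-comparable are reachable in the order of their depths; apply this to `(u, c)` and `(c, v)`.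
-/

open Relation

section Composition

variable (g1 g2 : SP)

theorem depth_src (g : SP) : depth g (src g) = 0 := by cases g <;> rfl

theorem fpath_src (g : SP) : fpath g (src g) = [] := by cases g <;> rfl

theorem seq_cases (w : V (.seq g1 g2)) :
    (∃ x, w = emb1 g1 g2 x) ∨ ∃ n, w = emb2 g1 g2 (Sum.inr n) := by
  rcases w with ⟨⟩ | n | n
  · exact .inl ⟨src g1, rfl⟩
  · exact .inl ⟨Sum.inr n, rfl⟩
  · exact .inr ⟨n, rfl⟩

theorem par_cases (w : V (.par g1 g2)) :
    w = src _ ∨ (∃ x, w = embL g1 g2 x) ∨ (∃ x, w = embR g1 g2 x) ∨ w = snk _ := by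
  rcases w with ⟨⟩ | (x | x) | ⟨⟩
  · exact .inl rfl
  · exact .inr (.inl ⟨x, rfl⟩)
  · exact .inr (.inr (.inl ⟨x, rfl⟩))
  · exact .inr (.inr (.inr rfl))

theorem snk_seq : snk (.seq g1 g2) = emb2 g1 g2 (snk g2) := by
  rw [snk]
  cases snk g2 <;> rfl

theorem emb2_src : emb2 g1 g2 (src g2) = emb1 g1 g2 (snk g1) := rfl

theorem depth_emb1 (x : V g1) : depth (.seq g1 g2) (emb1 g1 g2 x) = depth g1 x := by
  cases x with
  | inl => exact (depth_src g1).symm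
  | inr => rfl

theorem fpath_emb1 (x : V g1) : fpath (.seq g1 g2) (emb1 g1 g2 x) = fpath g1 x := by
  cases x with
  | inl => exact (fpath_src g1).symm
  | inr => rfl

theorem depth_emb2 (x : V g2) :
    depth (.seq g1 g2) (emb2 g1 g2 x) = depth g1 (snk g1) + depth g2 x := by
  cases x with
  | inl u =>
    cases u
    show depth _ (emb1 g1 g2 (snk g1)) = _ + depth g2 (src g2)
    rw [depth_emb1, depth_src, Nat.add_zero]
  | inr => rfl

theorem fpath_snk (g : SP) : fpath g (snk g) = [] := by
  induction g with
  | vert => rfl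
  | seq g1 g2 ih1 ih2 =>
    rw [snk]
    cases h : snk g2 with
    | inl => rw [fpath_emb1, ih1]
    | inr n => rw [← ih2, h]; rfl
  | par => rfl

theorem fpath_emb2 (x : V g2) : fpath (.seq g1 g2) (emb2 g1 g2 x) = fpath g2 x := by
  cases x with
  | inl u =>
    cases u
    show fpath _ (emb1 g1 g2 (snk g1)) = fpath g2 (src g2)
    rw [fpath_emb1, fpath_snk, fpath_src]
  | inr => rfl

theorem depth_embL (x : V g1) : depth (.par g1 g2) (embL g1 g2 x) = 1 + depth g1 x := rfl

theorem depth_embR (x : V g2) : depth (.par g1 g2) (embR g1 g2 x) = 1 + depth g2 x := rfl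

theorem depth_snk_par :
    depth (.par g1 g2) (snk _) = 1 + max (1 + depth g1 (snk g1)) (1 + depth g2 (snk g2)) := rfl

theorem fpath_embL (x : V g1) : fpath (.par g1 g2) (embL g1 g2 x) = false :: fpath g1 x := rfl

theorem fpath_embR (x : V g2) : fpath (.par g1 g2) (embR g1 g2 x) = true :: fpath g2 x := rfl

theorem edge_src_embL : Edge (.par g1 g2) (src _) (embL g1 g2 (src g1)) :=
  .inr (.inr (.inl ⟨rfl, rfl⟩))

theorem edge_src_embR : Edge (.par g1 g2) (src _) (embR g1 g2 (src g2)) :=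
  .inr (.inr (.inr (.inl ⟨rfl, rfl⟩)))

theorem edge_embL_snk : Edge (.par g1 g2) (embL g1 g2 (snk g1)) (snk _) :=
  .inr (.inr (.inr (.inr (.inl ⟨rfl, rfl⟩))))

theorem edge_embR_snk : Edge (.par g1 g2) (embR g1 g2 (snk g2)) (snk _) :=
  .inr (.inr (.inr (.inr (.inr ⟨rfl, rfl⟩))))

variable {g1 g2}

theorem Reach.emb1 {a b : V g1} (h : Reach g1 a b) :
    Reach (.seq g1 g2) (emb1 g1 g2 a) (emb1 g1 g2 b) :=
  h.lift _ fun _ _ he => .inl ⟨_, _, he, rfl, rfl⟩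

theorem Reach.emb2 {a b : V g2} (h : Reach g2 a b) :
    Reach (.seq g1 g2) (emb2 g1 g2 a) (emb2 g1 g2 b) :=
  h.lift _ fun _ _ he => .inr ⟨_, _, he, rfl, rfl⟩

theorem Reach.embL {a b : V g1} (h : Reach g1 a b) :
    Reach (.par g1 g2) (embL g1 g2 a) (embL g1 g2 b) :=
  h.lift _ fun _ _ he => .inl ⟨_, _, he, rfl, rfl⟩

theorem Reach.embR {a b : V g2} (h : Reach g2 a b) :
    Reach (.par g1 g2) (embR g1 g2 a) (embR g1 g2 b) :=
  h.lift _ fun _ _ he => .inr (.inl ⟨_, _, he, rfl, rfl⟩)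

end Composition

theorem reach_snk (g : SP) (w : V g) : Reach g w (snk g) := by
  induction g with
  | vert =>
    rcases w with ⟨⟩ | n
    · exact .refl
    · exact n.elim
  | seq g1 g2 ih1 ih2 =>
    rw [snk_seq]
    rcases seq_cases g1 g2 w with ⟨x, rfl⟩ | ⟨n, rfl⟩
    · exact (ih1 x).emb1.trans (emb2_src g1 g2 ▸ (ih2 (src g2)).emb2)
    · exact (ih2 _).emb2
  | par g1 g2 ih1 ih2 =>
    have embL_reach : ∀ x, Reach (.par g1 g2) (embL g1 g2 x) (snk _) :=
      fun x => (ih1 x).embL.tail (edge_embL_snk g1 g2)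
    rcases par_cases g1 g2 w with rfl | ⟨x, rfl⟩ | ⟨x, rfl⟩ | rfl
    · exact .head (edge_src_embL g1 g2) (embL_reach _)
    · exact embL_reach x
    · exact (ih2 x).embR.tail (edge_embR_snk g1 g2)
    · exact .refl

theorem reach_src (g : SP) (w : V g) : Reach g (src g) w := by
  induction g with
  | vert =>
    rcases w with ⟨⟩ | n
    · exact .refl
    · exact n.elim
  | seq g1 g2 ih1 ih2 =>
    rcases seq_cases g1 g2 w with ⟨x, rfl⟩ | ⟨n, rfl⟩
    · exact (ih1 x).emb1
    · exact (reach_snk g1 (src g1)).emb1.trans (emb2_src g1 g2 ▸ (ih2 _).emb2)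
  | par g1 g2 ih1 ih2 =>
    rcases par_cases g1 g2 w with rfl | ⟨x, rfl⟩ | ⟨x, rfl⟩ | rfl
    · exact .refl
    · exact .head (edge_src_embL g1 g2) (ih1 x).embL
    · exact .head (edge_src_embR g1 g2) (ih2 x).embR
    · exact .head (edge_src_embL g1 g2) ((reach_snk g1 _).embL.tail (edge_embL_snk g1 g2))

theorem reach_emb1_emb2 {g1 g2 : SP} (x : V g1) (y : V g2) :
    Reach (.seq g1 g2) (emb1 g1 g2 x) (emb2 g1 g2 y) :=
  (reach_snk g1 x).emb1.trans (emb2_src g1 g2 ▸ (reach_src g2 y).emb2)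

theorem Edge.depth_lt {g : SP} {u v : V g} (h : Edge g u v) : depth g u < depth g v := by
  induction g with
  | vert => exact h.elim
  | seq g1 g2 ih1 ih2 =>
    rcases h with ⟨a, b, he, rfl, rfl⟩ | ⟨a, b, he, rfl, rfl⟩
    · rw [depth_emb1, depth_emb1]; exact ih1 he
    · rw [depth_emb2, depth_emb2]; exact Nat.add_lt_add_left (ih2 he) _
  | par g1 g2 ih1 ih2 =>
    rcases h with ⟨a, b, he, rfl, rfl⟩ | ⟨a, b, he, rfl, rfl⟩ | ⟨rfl, rfl⟩ | ⟨rfl, rfl⟩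
      | ⟨rfl, rfl⟩ | ⟨rfl, rfl⟩
    · exact Nat.add_lt_add_left (ih1 he) _
    · exact Nat.add_lt_add_left (ih2 he) _
    all_goals
      simp only [depth_src, depth_embL, depth_embR, depth_snk_par]
      omega

theorem Reach.depth_le {g : SP} {u v : V g} (h : Reach g u v) : depth g u ≤ depth g v := by
  induction h with
  | refl => exact le_rfl
  | tail _ he ih => exact ih.trans he.depth_lt.le

theorem depth_le_snk (g : SP) (w : V g) : depth g w ≤ depth g (snk g) := (reach_snk g w).depth_le

theorem Reach.depth_lt_of_ne {g : SP} {u v : V g} (h : Reach g u v) (hne : u ≠ v) :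
    depth g u < depth g v := by
  rcases h.cases_head with rfl | ⟨w, he, hr⟩
  · exact absurd rfl hne
  · exact he.depth_lt.trans_le (Reach.depth_le hr)

theorem depth_pos {g : SP} (n : NV g) : 0 < depth g (Sum.inr n) :=
  depth_src g ▸ (reach_src g _).depth_lt_of_ne Sum.inl_ne_inr

theorem eq_src_of_depth_le_src {g : SP} {w : V g} (h : depth g w ≤ depth g (src g)) :
    w = src g := by
  by_contra hne
  exact absurd h ((reach_src g w).depth_lt_of_ne (Ne.symm hne)).not_ge

theorem eq_snk_of_depth_snk_le {g : SP} {w : V g} (h : depth g (snk g) ≤ depth g w) :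
    w = snk g := by
  by_contra hne
  exact absurd h ((reach_snk g w).depth_lt_of_ne hne).not_ge

theorem reach_of_comparable_of_depth_le {g : SP} {u v : V g}
    (hp : fpath g u <+: fpath g v ∨ fpath g v <+: fpath g u) (hd : depth g u ≤ depth g v) :
    Reach g u v := by
  induction g with
  | vert =>
    rcases u with ⟨⟩ | ⟨⟨⟩⟩
    exact reach_src _ v
  | seq g1 g2 ih1 ih2 =>
    rcases seq_cases g1 g2 u with ⟨x, rfl⟩ | ⟨n, rfl⟩ <;>
      rcases seq_cases g1 g2 v with ⟨y, rfl⟩ | ⟨m, rfl⟩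
    · rw [fpath_emb1, fpath_emb1] at hp
      rw [depth_emb1, depth_emb1] at hd
      exact (ih1 hp hd).emb1
    · exact reach_emb1_emb2 x _
    · rw [depth_emb2, depth_emb1] at hd
      have := depth_le_snk g1 y
      have := depth_pos (g := g2) n
      omega
    · rw [fpath_emb2, fpath_emb2] at hp
      rw [depth_emb2, depth_emb2] at hd
      exact (ih2 hp (by omega)).emb2
  | par g1 g2 ih1 ih2 =>
    rcases par_cases g1 g2 u with rfl | ⟨x, rfl⟩ | ⟨x, rfl⟩ | rfl
    · exact reach_src _ v
    · rcases par_cases g1 g2 v with rfl | ⟨y, rfl⟩ | ⟨y, rfl⟩ | rfl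
      · rw [eq_src_of_depth_le_src hd]; exact .refl
      · exact (ih1 (by simpa [fpath_embL] using hp) (by simpa [depth_embL] using hd)).embL
      · simp [fpath_embL, fpath_embR] at hp
      · exact reach_snk _ _
    · rcases par_cases g1 g2 v with rfl | ⟨y, rfl⟩ | ⟨y, rfl⟩ | rfl
      · rw [eq_src_of_depth_le_src hd]; exact .refl
      · simp [fpath_embL, fpath_embR] at hp
      · exact (ih2 (by simpa [fpath_embR] using hp) (by simpa [depth_embR] using hd)).embR
      · exact reach_snk _ _
    · rw [eq_snk_of_depth_snk_le hd]; exact .refl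

theorem lcp_self (p : List Bool) : lcp p p = p := by
  induction p with
  | nil => rfl
  | cons a p ih => simp [lcp, ih]

theorem lcp_prefix_left (p q : List Bool) : lcp p q <+: p := by
  induction p generalizing q with
  | nil => cases q <;> exact List.nil_prefix
  | cons a p ih =>
    cases q with
    | nil => exact List.nil_prefix
    | cons b q => by_cases h : a = b <;> simp [lcp, h, ih q]

theorem lcp_prefix_right (p q : List Bool) : lcp p q <+: q := by
  induction p generalizing q with
  | nil => cases q <;> exact List.nil_prefix
  | cons a p ih =>
    cases q with
    | nil => exact List.nil_prefix
    | cons b q => by_cases h : a = b <;> simp [lcp, h, ih q]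

theorem lcp_append_singleton (p q : List Bool) (b : Bool) :
    lcp p (q ++ [b]) = lcp p q ∨ lcp p (q ++ [b]) = q ++ [b] := by
  induction q generalizing p with
  | nil =>
    cases p with
    | nil => simp [lcp]
    | cons c p => by_cases hc : c = b <;> simp [lcp, hc]
  | cons a q ih =>
    cases p with
    | nil => simp [lcp]
    | cons c p => by_cases hc : c = a <;> rcases ih p with h | h <;> simp [lcp, h, hc]

theorem lcp_of_eq_append_singleton (p q : List Bool) (b : Bool) :
    lcp p q = lcp p (q ++ [b]) ∨ lcp p q = q := by
  induction q generalizing p with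
  | nil => cases p <;> simp [lcp]
  | cons a q ih =>
    cases p with
    | nil => simp [lcp]
    | cons c p => by_cases hc : c = a <;> rcases ih p with h | h <;> simp [lcp, h, hc]

theorem Edge.fpath_fork_or_join {g : SP} {u v : V g} (h : Edge g u v) :
    (∃ b, fpath g v = fpath g u ++ [b]) ∨ ∃ b, fpath g u = fpath g v ++ [b] := by
  induction g with
  | vert => exact h.elim
  | seq g1 g2 ih1 ih2 =>
    rcases h with ⟨a, b, he, rfl, rfl⟩ | ⟨a, b, he, rfl, rfl⟩
    · simpa only [fpath_emb1] using ih1 he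
    · simpa only [fpath_emb2] using ih2 he
  | par g1 g2 ih1 ih2 =>
    rcases h with ⟨a, b, he, rfl, rfl⟩ | ⟨a, b, he, rfl, rfl⟩ | ⟨rfl, rfl⟩ | ⟨rfl, rfl⟩
      | ⟨rfl, rfl⟩ | ⟨rfl, rfl⟩
    · simpa [fpath_embL] using ih1 he
    · simpa [fpath_embR] using ih2 he
    all_goals simp [fpath_src, fpath_snk, fpath_embL, fpath_embR]

theorem Edge.lcp_fpath {g : SP} {v' v : V g} (h : Edge g v' v) (p : List Bool) :
    lcp p (fpath g v) = lcp p (fpath g v') ∨ lcp p (fpath g v) = fpath g v := by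
  rcases h.fpath_fork_or_join with ⟨b, hb⟩ | ⟨b, hb⟩
  · rw [hb]; exact lcp_append_singleton _ _ _
  · rw [hb]; exact lcp_of_eq_append_singleton _ _ _

theorem Reach.exists_fpath_eq_lcp {g : SP} {u v : V g} (h : Reach g u v) :
    ∃ w, fpath g w = lcp (fpath g u) (fpath g v) ∧ Reach g u w ∧ Reach g w v := by
  induction h with
  | refl => exact ⟨u, (lcp_self _).symm, .refl, .refl⟩
  | @tail v' v huv' he ih =>
    obtain ⟨w, hw, huw, hwv'⟩ := ih
    rcases he.lcp_fpath (fpath g u) with h | h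
    · exact ⟨w, hw.trans h.symm, huw, hwv'.tail he⟩
    · exact ⟨v, h.symm, huv'.tail he, .refl⟩

theorem reach_iff_exists_fpath_eq_lcp (g : SP) (u v : V g) :
    Reach g u v ↔ ∃ w, fpath g w = lcp (fpath g u) (fpath g v) ∧
      depth g u ≤ depth g w ∧ depth g w ≤ depth g v := by
  constructor
  · intro h
    obtain ⟨w, hw, huw, hwv⟩ := h.exists_fpath_eq_lcp
    exact ⟨w, hw, huw.depth_le, hwv.depth_le⟩
  · rintro ⟨w, hw, huw, hwv⟩
    have hpu : fpath g w <+: fpath g u := hw ▸ lcp_prefix_left _ _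
    have hpv : fpath g w <+: fpath g v := hw ▸ lcp_prefix_right _ _
    exact (reach_of_comparable_of_depth_le (.inr hpu) huw).trans
      (reach_of_comparable_of_depth_le (.inl hpv) hwv)

theorem reach_iff_depth_critical_general (g : SP) (u v c : V g)
    (hc : fpath g c = lcp (fpath g u) (fpath g v))
    (hcd : depth g c ≤ depth g v)
    (hmax : ∀ c' : V g, fpath g c' = lcp (fpath g u) (fpath g v) →
      depth g c' ≤ depth g v → depth g c' ≤ depth g c) :
    Reach g u v ↔ (depth g u ≤ depth g c ∧ depth g c ≤ depth g v) := by
  rw [reach_iff_exists_fpath_eq_lcp]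
  constructor
  · rintro ⟨w, hw, huw, hwv⟩
    exact ⟨huw.trans (hmax w hw hwv), hcd⟩
  · rintro ⟨huc, hcv⟩
    exact ⟨c, hc, huc, hcv⟩

/-- with `d(u) ≤ d(v)` and `c` the critical vertex of `(u, v)`
(fork-path equal to `lcp (f u) (f v)`, of maximal dag-depth subject to
`d(c) ≤ d(v)`), we have `u ≼ v` iff `d(u) ≤ d(c) ≤ d(v)`. -/
theorem reach_iff_depth_critical (g : SP) (u v c : V g)
    (hd : depth g u ≤ depth g v)
    (hc : fpath g c = lcp (fpath g u) (fpath g v))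
    (hcd : depth g c ≤ depth g v)
    (hmax : ∀ c' : V g, fpath g c' = lcp (fpath g u) (fpath g v) →
      depth g c' ≤ depth g v → depth g c' ≤ depth g c) :
    Reach g u v ↔ (depth g u ≤ depth g c ∧ depth g c ≤ depth g v) :=
  reach_iff_depth_critical_general g u v c hc hcd hmax
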